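/- arXiv:2101.12515 — 4 statements merged into one kernel-verified Lean document; each statement's English description precedes it below -/
import Mathlib

section
/- Fix x, y ∈ ℂ \ {0} with x ≠ 1, y ≠ 1 and xy ≠ 1. Then, as q tends to 0 through nonzero complex numbers, the quotient (δ_q(x, y) − (xy − 1)/((x − 1)(y − 1)))/q tends to x⁻¹y⁻¹ − xy; that is, δ admits the q-expansion δ_q(x,y) = (1 − (xy)⁻¹)/((1 − x⁻¹)(1 − y⁻¹)) + q(x⁻¹y⁻¹ − xy) + O(q²). -/
/-!
Near `q = 0` every factor of `δ_q` is a product `(aq; q)_∞ = ∏_{n ≥ 1} (1 - qⁿa)`, which converges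
locally uniformly and hence is holomorphic; its logarithmic derivative at `0` is the sum of those
of its factors, of which only `1 - qa` contributes, so `(aq; q)_∞ = 1 - aq + O(q²)`. Hence `δ_q` is
differentiable at `q = 0`, and the quotient rule yields its derivative `x⁻¹y⁻¹ - xy` there.
-/

open scoped BigOperators

/-- The multiplicative Jacobi theta function, renormalized:
`φ_q(x) = (x - 1) * ∏_{n=1}^∞ (1 - qⁿx)(1 - qⁿx⁻¹)`. -/
noncomputable def phi (q x : ℂ) : ℂ :=
  (x - 1) * ∏' n : ℕ, ((1 - q ^ (n + 1) * x) * (1 - q ^ (n + 1) * x⁻¹))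

/-- Zagier's function `δ(x,y) = θ'(1)·θ(xy)/(θ(x)·θ(y))`, expressed via `φ_q`:
`δ_q(x,y) = (∏_{n=1}^∞ (1 - qⁿ)²)·φ_q(xy)/(φ_q(x)·φ_q(y))`. -/
noncomputable def del (q x y : ℂ) : ℂ :=
  (∏' n : ℕ, (1 - q ^ (n + 1)) ^ 2) * phi q (x * y) / (phi q x * phi q y)

open Complex Filter Metric

/-- The q-Pochhammer symbol `(aq; q)_∞`. -/
noncomputable def qPoch (a q : ℂ) : ℂ := ∏' n : ℕ, (1 - q ^ (n + 1) * a)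

lemma multipliableLocallyUniformlyOn_qPoch (a : ℂ) :
    MultipliableLocallyUniformlyOn (fun n q ↦ 1 - q ^ (n + 1) * a) (ball 0 (1 / 2)) := by
  simp_rw [sub_eq_add_neg]
  refine Summable.multipliableLocallyUniformlyOn_nat_one_add isOpen_ball
    (u := fun n ↦ (1 / 2) ^ (n + 1) * ‖a‖) ?_ (.of_forall fun n q hq ↦ ?_)
    (fun n ↦ by fun_prop)
  · exact ((summable_nat_add_iff 1).mpr
      (summable_geometric_of_lt_one (by norm_num) (by norm_num))).mul_right _
  · rw [mem_ball_zero_iff] at hq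
    rw [norm_neg, norm_mul, norm_pow]
    gcongr

lemma multipliable_qPoch (a : ℂ) {q : ℂ} (hq : q ∈ ball (0 : ℂ) (1 / 2)) :
    Multipliable fun n ↦ 1 - q ^ (n + 1) * a :=
  (multipliableLocallyUniformlyOn_qPoch a).multipliable hq

@[simp]
lemma qPoch_zero (a : ℂ) : qPoch a 0 = 1 := by
  simp [qPoch]

lemma differentiableOn_qPoch (a : ℂ) : DifferentiableOn ℂ (qPoch a) (ball 0 (1 / 2)) :=
  (multipliableLocallyUniformlyOn_qPoch a).hasProdLocallyUniformlyOn.differentiableOn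
    (.of_forall fun _ ↦ by simpa [Finset.prod_fn] using
      DifferentiableOn.finsetProd (fun _ _ ↦ by fun_prop)) isOpen_ball

lemma hasDerivAt_qPoch_zero (a : ℂ) : HasDerivAt (qPoch a) (-a) 0 := by
  have hlog (n : ℕ) : logDeriv (fun q : ℂ ↦ 1 - q ^ (n + 1) * a) 0 = if n = 0 then -a else 0 := by
    have := (((hasDerivAt_pow (n + 1) (0 : ℂ)).mul_const a).const_sub 1).deriv
    rw [logDeriv_apply, this]
    rcases n with _ | n <;> simp
  have hsum : HasSum (fun n : ℕ ↦ logDeriv (fun q : ℂ ↦ 1 - q ^ (n + 1) * a) 0) (-a) := by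
    simp_rw [hlog]
    exact hasSum_ite_eq 0 (-a)
  have hprod := logDeriv_tprod_eq_tsum isOpen_ball (mem_ball_self (by norm_num : (0 : ℝ) < 1 / 2))
    (fun n ↦ by simp) (fun n ↦ by fun_prop) hsum.summable (multipliableLocallyUniformlyOn_qPoch a)
    (by simp)
  have hdiff : DifferentiableAt ℂ (qPoch a) 0 :=
    (differentiableOn_qPoch a).differentiableAt (ball_mem_nhds 0 (by norm_num))
  rw [hsum.tsum_eq] at hprod
  change logDeriv (qPoch a) 0 = -a at hprod
  rw [logDeriv_apply, qPoch_zero, div_one] at hprod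
  exact hprod ▸ hdiff.hasDerivAt

lemma phi_eq_qPoch (z : ℂ) {q : ℂ} (hq : q ∈ ball (0 : ℂ) (1 / 2)) :
    phi q z = (z - 1) * (qPoch z q * qPoch z⁻¹ q) := by
  rw [phi, (multipliable_qPoch z hq).tprod_mul (multipliable_qPoch z⁻¹ hq), qPoch, qPoch]

lemma tprod_one_sub_pow_sq_eq_qPoch {q : ℂ} (hq : q ∈ ball (0 : ℂ) (1 / 2)) :
    ∏' n : ℕ, (1 - q ^ (n + 1)) ^ 2 = qPoch 1 q ^ 2 := by
  simpa [qPoch] using (multipliable_qPoch 1 hq).tprod_pow 2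

lemma phi_zero (z : ℂ) : phi 0 z = z - 1 := by
  simpa using phi_eq_qPoch z (mem_ball_self (by norm_num))

lemma hasDerivAt_phi_zero (z : ℂ) :
    HasDerivAt (phi · z) (-((z - 1) * (z + z⁻¹))) 0 := by
  have h := ((hasDerivAt_qPoch_zero z).mul (hasDerivAt_qPoch_zero z⁻¹)).const_mul (z - 1)
  simp only [qPoch_zero] at h
  refine (h.congr_of_eventuallyEq ?_).congr_deriv (by ring)
  filter_upwards [ball_mem_nhds (0 : ℂ) (by norm_num : (0 : ℝ) < 1 / 2)] with q hq
  exact phi_eq_qPoch z hq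

lemma hasDerivAt_tprod_one_sub_pow_sq_zero :
    HasDerivAt (fun q : ℂ ↦ ∏' n : ℕ, (1 - q ^ (n + 1)) ^ 2) (-2) 0 := by
  have h := (hasDerivAt_qPoch_zero 1).pow 2
  simp only [qPoch_zero] at h
  refine (h.congr_of_eventuallyEq ?_).congr_deriv (by norm_num)
  filter_upwards [ball_mem_nhds (0 : ℂ) (by norm_num : (0 : ℝ) < 1 / 2)] with q hq
  exact tprod_one_sub_pow_sq_eq_qPoch hq

lemma del_zero (x y : ℂ) : del 0 x y = (x * y - 1) / ((x - 1) * (y - 1)) := by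
  simp [del, phi_zero]

lemma hasDerivAt_del_zero {x y : ℂ} (hx0 : x ≠ 0) (hy0 : y ≠ 0) (hx1 : x ≠ 1) (hy1 : y ≠ 1) :
    HasDerivAt (del · x y) (x⁻¹ * y⁻¹ - x * y) 0 := by
  have hx : x - 1 ≠ 0 := sub_ne_zero.mpr hx1
  have hy : y - 1 ≠ 0 := sub_ne_zero.mpr hy1
  have hden : phi 0 x * phi 0 y ≠ 0 := by
    rw [phi_zero, phi_zero]
    exact mul_ne_zero hx hy
  refine ((hasDerivAt_tprod_one_sub_pow_sq_zero.mul (hasDerivAt_phi_zero (x * y))).div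
    ((hasDerivAt_phi_zero x).mul (hasDerivAt_phi_zero y)) hden).congr_deriv ?_
  simp only [Pi.mul_apply, phi_zero, zero_pow (Nat.succ_ne_zero _), sub_zero, one_pow, tprod_one,
    mul_inv]
  field_simp
  ring

theorem stmt_9_general (x y : ℂ) (hx0 : x ≠ 0) (hy0 : y ≠ 0)
    (hx1 : x ≠ 1) (hy1 : y ≠ 1) :
    Filter.Tendsto
      (fun q : ℂ => (del q x y - (x * y - 1) / ((x - 1) * (y - 1))) / q)
      (nhdsWithin 0 {0}ᶜ) (nhds (x⁻¹ * y⁻¹ - x * y)) := by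
  have h := hasDerivAt_iff_tendsto_slope.mp (hasDerivAt_del_zero hx0 hy0 hx1 hy1)
  refine h.congr fun q ↦ ?_
  rw [slope_def_field, del_zero, sub_zero]

theorem stmt_9 (x y : ℂ) (hx0 : x ≠ 0) (hy0 : y ≠ 0)
    (hx1 : x ≠ 1) (hy1 : y ≠ 1) (hxy : x * y ≠ 1) :
    Filter.Tendsto
      (fun q : ℂ => (del q x y - (x * y - 1) / ((x - 1) * (y - 1))) / q)
      (nhdsWithin 0 {0}ᶜ) (nhds (x⁻¹ * y⁻¹ - x * y)) :=
  stmt_9_general x y hx0 hy0 hx1 hy1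
end

section
/- Fix x, y ∈ ℂ \ {0} with x ≠ 1, assume that neither y nor xy is a positive real number, and fix λ ∈ ℝ \ ℤ. Then, as q tends to 0⁺ through real numbers in (0,1), δ_q(x, q^{−λ}y) tends to x^{⌊λ⌋}/(1 − x⁻¹), where ⌊λ⌋ is the integer floor of λ. -/
/-!
Write `λ = ⌊λ⌋ + μ` with `0 < μ < 1`. The quasi-periodicity `φ_q(qz) = -z⁻¹ φ_q(z)` gives
`δ_q(x, qw) = x⁻¹ δ_q(x, w)`, which pulls out the factor `x ^ ⌊λ⌋`. In the factorization
`φ_q(z) = (z - 1) (qz; q)_∞ (q/z; q)_∞` every q-Pochhammer symbol occurring in `δ_q(x, w)` tends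
to `1` as soon as `q → 0`, `w → ∞` and `qw → 0`, which is the case for `w = q^{-μ} y` because
`0 < μ < 1`. What is left is `(xw - 1) / ((x - 1)(w - 1)) → x / (x - 1)`.
-/

open scoped BigOperators

open Filter Topology Bornology

noncomputable def qPochhammer (a q : ℂ) : ℂ :=
  ∏' n : ℕ, (1 - a * q ^ n)

section qPochhammer

variable {q : ℂ}

lemma multipliable_one_sub_mul_pow (a : ℂ) (hq : ‖q‖ < 1) :
    Multipliable fun n : ℕ => 1 - a * q ^ n :=
  (Complex.multipliable_one_add_of_summable
    ((summable_geometric_of_norm_lt_one hq).mul_left a).neg).congr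
    fun _ => (sub_eq_add_neg _ _).symm

lemma qPochhammer_eq_one_sub_mul (a : ℂ) (hq : ‖q‖ < 1) :
    qPochhammer a q = (1 - a) * qPochhammer (a * q) q := by
  have hshift : Multipliable fun n : ℕ => 1 - a * q ^ (n + 1) := by
    simpa only [pow_succ, mul_assoc, mul_comm q] using multipliable_one_sub_mul_pow (a * q) hq
  rw [qPochhammer, tprod_eq_zero_mul' (f := fun n : ℕ => 1 - a * q ^ n) hshift, pow_zero,
    mul_one, qPochhammer]
  simp only [pow_succ, mul_assoc, mul_comm q]

lemma tendsto_qPochhammer_one {α : Type*} {l : Filter α} {a q : α → ℂ}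
    (ha : Tendsto a l (𝓝 0)) (hq : Tendsto q l (𝓝 0)) :
    Tendsto (fun t => qPochhammer (a t) (q t)) l (𝓝 1) := by
  have hbound : ∀ᶠ t in l, ∀ n : ℕ, ‖-(a t * q t ^ n)‖ ≤ (1 / 2) ^ n := by
    filter_upwards [ha.norm.eventually (ge_mem_nhds (by norm_num : ‖(0 : ℂ)‖ < 1)),
      hq.norm.eventually (ge_mem_nhds (by norm_num : ‖(0 : ℂ)‖ < 1 / 2))] with t hat hqt n
    rw [norm_neg, norm_mul, norm_pow]
    calc ‖a t‖ * ‖q t‖ ^ n ≤ 1 * (1 / 2) ^ n := by gcongr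
      _ = (1 / 2) ^ n := one_mul _
  have hterm (n : ℕ) : Tendsto (fun t => -(a t * q t ^ n)) l (𝓝 0) := by
    simpa using (ha.mul (hq.pow n)).neg
  have := tendsto_tprod_one_add_of_dominated_convergence
    (summable_geometric_of_lt_one (by norm_num) (by norm_num)) hterm hbound
  simp only [add_zero, tprod_one] at this
  exact this.congr fun t => tprod_congr fun n => (sub_eq_add_neg _ _).symm

lemma tprod_one_sub_pow_succ_sq (hq : ‖q‖ < 1) :
    ∏' n : ℕ, (1 - q ^ (n + 1)) ^ 2 = qPochhammer q q ^ 2 := by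
  rw [qPochhammer, ← (multipliable_one_sub_mul_pow q hq).tprod_pow]
  simp only [pow_succ' q]

lemma phi_eq_qPochhammer (x : ℂ) (hq : ‖q‖ < 1) :
    phi q x = (x - 1) * (qPochhammer (q * x) q * qPochhammer (q * x⁻¹) q) := by
  rw [phi, qPochhammer, qPochhammer, ← (multipliable_one_sub_mul_pow _ hq).tprod_mul
    (multipliable_one_sub_mul_pow _ hq)]
  congr 2 with n
  ring

lemma phi_mul_left {z : ℂ} (hq0 : q ≠ 0) (hq : ‖q‖ < 1) (hz : z ≠ 0) :
    phi q (q * z) = -z⁻¹ * phi q z := by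
  have hinv : q * (q * z)⁻¹ = z⁻¹ := by field_simp
  rw [phi_eq_qPochhammer _ hq, phi_eq_qPochhammer _ hq, hinv,
    qPochhammer_eq_one_sub_mul z⁻¹ hq, qPochhammer_eq_one_sub_mul (q * z) hq,
    mul_comm z⁻¹ q, mul_comm (q * z) q]
  field_simp
  ring

end qPochhammer

section del

variable {q x : ℂ}

lemma del_mul_left {w : ℂ} (hq0 : q ≠ 0) (hq : ‖q‖ < 1) (hx : x ≠ 0) (hw : w ≠ 0) :
    del q x (q * w) = x⁻¹ * del q x w := by
  rw [del, del, mul_left_comm x q w, phi_mul_left hq0 hq (mul_ne_zero hx hw),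
    phi_mul_left hq0 hq hw]
  generalize ∏' n : ℕ, (1 - q ^ (n + 1)) ^ 2 = P
  generalize phi q (x * w) = A
  generalize phi q x = B
  generalize phi q w = C
  field_simp

lemma del_zpow_mul {w : ℂ} (hq0 : q ≠ 0) (hq : ‖q‖ < 1) (hx : x ≠ 0) (hw : w ≠ 0) (k : ℤ) :
    del q x (q ^ k * w) = x ^ (-k) * del q x w := by
  have hmul (k : ℤ) : del q x (q ^ (k + 1) * w) = x⁻¹ * del q x (q ^ k * w) := by
    rw [zpow_add_one₀ hq0, mul_comm _ q, mul_assoc,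
      del_mul_left hq0 hq hx (mul_ne_zero (zpow_ne_zero k hq0) hw)]
  induction k using Int.induction_on with
  | zero => simp
  | succ k ih =>
    rw [hmul, ih, neg_add, zpow_add₀ hx, zpow_neg_one]
    ring
  | pred k ih =>
    have h := hmul (-k - 1)
    rw [sub_add_cancel, ih, ← inv_mul_eq_iff_eq_mul₀ (inv_ne_zero hx), inv_inv] at h
    rw [← h, show -(-(k : ℤ) - 1) = - -k + 1 by ring, zpow_add_one₀ hx]
    ring

lemma del_eq_mul_qPochhammer (w : ℂ) (hq : ‖q‖ < 1) :
    del q x w = (x * w - 1) / (w - 1) *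
      (qPochhammer q q ^ 2 * (qPochhammer (q * (x * w)) q * qPochhammer (q * (x * w)⁻¹) q) /
        ((x - 1) * (qPochhammer (q * x) q * qPochhammer (q * x⁻¹) q) *
          (qPochhammer (q * w) q * qPochhammer (q * w⁻¹) q))) := by
  rw [del, tprod_one_sub_pow_succ_sq hq, phi_eq_qPochhammer _ hq, phi_eq_qPochhammer _ hq,
    phi_eq_qPochhammer _ hq, div_mul_div_comm]
  congr 1 <;> ring

end del

lemma tendsto_div_sub_one_cobounded (x : ℂ) :
    Tendsto (fun w : ℂ => (x * w - 1) / (w - 1)) (cobounded ℂ) (𝓝 x) := by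
  have hinv := tendsto_inv₀_cobounded (α := ℂ)
  have hlim := (tendsto_const_nhds (x := x)).sub hinv |>.div
    ((tendsto_const_nhds (x := (1 : ℂ))).sub hinv) (by norm_num)
  rw [sub_zero, sub_zero, div_one] at hlim
  refine hlim.congr' ?_
  filter_upwards [eventually_ne_cobounded 0] with w hw
  change (x - w⁻¹) / (1 - w⁻¹) = _
  field_simp

lemma tendsto_del {α : Type*} {l : Filter α} {q w : α → ℂ} {x : ℂ} (hx : x ≠ 1)
    (hq : Tendsto q l (𝓝 0)) (hw : Tendsto w l (cobounded ℂ))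
    (hqw : Tendsto (fun t => q t * w t) l (𝓝 0)) :
    Tendsto (fun t => del (q t) x (w t)) l (𝓝 (x / (x - 1))) := by
  have hqw' : Tendsto (fun t => q t * (w t)⁻¹) l (𝓝 0) := by
    simpa using hq.mul (tendsto_inv₀_cobounded.comp hw)
  have hqxw : Tendsto (fun t => q t * (x * w t)) l (𝓝 0) := by
    simpa [mul_left_comm] using hqw.const_mul x
  have hqxw' : Tendsto (fun t => q t * (x * w t)⁻¹) l (𝓝 0) := by
    have := hqw'.const_mul x⁻¹
    rw [mul_zero] at this
    exact this.congr fun t => by rw [mul_inv]; ring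
  have hqx (c : ℂ) : Tendsto (fun t => q t * c) l (𝓝 0) := by simpa using hq.mul_const c
  have hP (a : α → ℂ) (ha : Tendsto a l (𝓝 0)) := tendsto_qPochhammer_one ha hq
  have hlim := ((tendsto_div_sub_one_cobounded x).comp hw).mul
    ((((hP _ hq).pow 2).mul ((hP _ hqxw).mul (hP _ hqxw'))).div
      (((tendsto_const_nhds (x := x - 1)).mul ((hP _ (hqx x)).mul (hP _ (hqx x⁻¹)))).mul
        ((hP _ hqw).mul (hP _ hqw'))) (by simpa [sub_eq_zero] using hx))
  simp only [one_pow, mul_one, one_div] at hlim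
  refine hlim.congr' ?_
  filter_upwards [hq.norm.eventually (gt_mem_nhds (by norm_num : ‖(0 : ℂ)‖ < 1))] with t ht
  exact (del_eq_mul_qPochhammer (w t) ht).symm

lemma tendsto_ofReal_rpow_neg_mul_cobounded {μ : ℝ} (hμ : 0 < μ) {y : ℂ} (hy : y ≠ 0) :
    Tendsto (fun q : ℝ => ((q ^ (-μ) : ℝ) : ℂ) * y) (𝓝[>] 0) (cobounded ℂ) := by
  rw [← tendsto_norm_atTop_iff_cobounded]
  refine ((tendsto_rpow_neg_nhdsGT_zero (neg_neg_of_pos hμ)).atTop_mul_const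
    (norm_pos_iff.mpr hy)).congr' ?_
  filter_upwards [self_mem_nhdsWithin] with q hq
  rw [norm_mul, Complex.norm_real, Real.norm_of_nonneg (Real.rpow_nonneg (le_of_lt hq) _)]

lemma tendsto_ofReal_mul_rpow_neg_mul {μ : ℝ} (hμ : μ < 1) (y : ℂ) :
    Tendsto (fun q : ℝ => (q : ℂ) * (((q ^ (-μ) : ℝ) : ℂ) * y)) (𝓝[>] 0) (𝓝 0) := by
  have hpow : Tendsto (fun q : ℝ => q ^ (1 - μ)) (𝓝[>] 0) (𝓝 0) := by
    simpa [Real.zero_rpow (sub_pos.mpr hμ).ne'] using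
      (Real.continuousAt_rpow_const 0 (1 - μ) (Or.inr (sub_pos.mpr hμ).le)).tendsto.mono_left
        nhdsWithin_le_nhds
  have := (Complex.continuous_ofReal.tendsto 0).comp hpow |>.mul_const y
  rw [Complex.ofReal_zero, zero_mul] at this
  refine this.congr' ?_
  filter_upwards [self_mem_nhdsWithin] with q hq
  rw [Function.comp_apply, ← mul_assoc, ← Complex.ofReal_mul, Real.rpow_sub hq, Real.rpow_one,
    Real.rpow_neg (le_of_lt hq), div_eq_mul_inv]

lemma del_rpow_neg_mul {q : ℝ} (hq0 : 0 < q) (hq1 : q < 1) {x y : ℂ} (hx : x ≠ 0)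
    (hy : y ≠ 0) (lam : ℝ) :
    del q x (((q ^ (-lam) : ℝ) : ℂ) * y) =
      x ^ ⌊lam⌋ * del q x (((q ^ (-Int.fract lam) : ℝ) : ℂ) * y) := by
  have hsplit : q ^ (-lam) = q ^ (-⌊lam⌋) * q ^ (-Int.fract lam) := by
    rw [← Real.rpow_intCast, ← Real.rpow_add hq0, Int.cast_neg, ← neg_add, Int.floor_add_fract]
  have hq : ‖(q : ℂ)‖ < 1 := by rwa [Complex.norm_real, Real.norm_of_nonneg hq0.le]
  rw [hsplit, Complex.ofReal_mul, Complex.ofReal_zpow, mul_assoc,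
    del_zpow_mul (Complex.ofReal_ne_zero.mpr hq0.ne') hq hx
      (mul_ne_zero (Complex.ofReal_ne_zero.mpr (Real.rpow_pos_of_pos hq0 _).ne') hy), neg_neg]

theorem stmt_10_general (x y : ℂ) (hx0 : x ≠ 0) (hy0 : y ≠ 0) (hx1 : x ≠ 1)
    (lam : ℝ) (hlam : ∀ m : ℤ, (m : ℝ) ≠ lam) :
    Filter.Tendsto
      (fun q : ℝ => del (q : ℂ) x (((Real.rpow q (-lam) : ℝ) : ℂ) * y))
      (nhdsWithin 0 (Set.Ioo (0 : ℝ) 1))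
      (nhds (x ^ (⌊lam⌋ : ℤ) / (1 - x⁻¹))) := by
  have hμ0 : 0 < Int.fract lam := Int.fract_pos.mpr (hlam ⌊lam⌋).symm
  have hq : Tendsto (fun q : ℝ => (q : ℂ)) (𝓝[>] 0) (𝓝 0) := by
    simpa using (Complex.continuous_ofReal.tendsto 0).mono_left nhdsWithin_le_nhds
  have hlim := tendsto_del hx1 hq (tendsto_ofReal_rpow_neg_mul_cobounded hμ0 hy0)
    (tendsto_ofReal_mul_rpow_neg_mul (Int.fract_lt_one lam) y)
  have hval : x ^ ⌊lam⌋ * (x / (x - 1)) = x ^ ⌊lam⌋ / (1 - x⁻¹) := by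
    have := sub_ne_zero.mpr hx1
    field_simp
  rw [← hval]
  refine ((hlim.mono_left (nhdsWithin_mono _ Set.Ioo_subset_Ioi_self)).const_mul _).congr' ?_
  filter_upwards [self_mem_nhdsWithin] with q ⟨hq0, hq1⟩
  exact (del_rpow_neg_mul hq0 hq1 hx0 hy0 lam).symm

theorem stmt_10 (x y : ℂ) (hx0 : x ≠ 0) (hy0 : y ≠ 0) (hx1 : x ≠ 1)
    (hy : ∀ r : ℝ, 0 < r → y ≠ (r : ℂ))
    (hxy : ∀ r : ℝ, 0 < r → x * y ≠ (r : ℂ))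
    (lam : ℝ) (hlam : ∀ m : ℤ, (m : ℝ) ≠ lam) :
    Filter.Tendsto
      (fun q : ℝ => del (q : ℂ) x (((Real.rpow q (-lam) : ℝ) : ℂ) * y))
      (nhdsWithin 0 (Set.Ioo (0 : ℝ) 1))
      (nhds (x ^ (⌊lam⌋ : ℤ) / (1 - x⁻¹))) :=
  stmt_10_general x y hx0 hy0 hx1 lam hlam
end

section
/- Let F be a field, let r ≥ 2, let t₁, …, t_r be pairwise distinct nonzero elements of F, and let y ∈ F be arbitrary. Then for every integer s with 1 ≤ s ≤ r − 1: ∑_{k=1}^{r} t_k^{−s} · ∏_{ℓ≠k} ((1+y)·(t_k/t_ℓ))/(1 − t_k/t_ℓ) = 0. (This is the localization computation showing that the pushforward of mC(ℙ^{r−1} ∖ coordinate hyperplanes ⊂ ℙ^{r−1})·O(s) to a point vanishes.) -/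
/-!
Each factor of the product equals `-(1 + y) t_k / (t_k - t_l)`, so the sum is
`(-(1 + y))^(r-1) ∑_k t_k^(r-1-s) / ∏_{l ≠ k} (t_k - t_l)`. By Lagrange interpolation the
last sum is the coefficient of `X^(r-1)` in `X^(r-1-s)`, which vanishes since `s ≥ 1`.
-/

open Finset Polynomial

theorem Lagrange.sum_pow_div_prod_sub_eq_zero {F ι : Type*} [Field F] [DecidableEq ι]
    {s : Finset ι} {v : ι → F} (hvs : Set.InjOn v s) {m : ℕ} (hm : m + 1 < #s) :
    ∑ i ∈ s, v i ^ m / ∏ j ∈ s.erase i, (v i - v j) = 0 := by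
  have hdeg : ((X : F[X]) ^ m).degree < #s := by
    rw [degree_X_pow]; exact_mod_cast (by omega : m < #s)
  simpa [coeff_X_pow, show #s - 1 ≠ m by omega] using (coeff_eq_sum hvs hdeg).symm

theorem mul_div_div_one_sub_div {F : Type*} [Field F] (c a : F) {b : F} (hb : b ≠ 0) :
    c * (a / b) / (1 - a / b) = -c * a / (a - b) := by
  rw [one_sub_div hb, mul_div_assoc', div_div_div_cancel_right₀ hb, ← neg_sub a b, div_neg,
    neg_mul, neg_div]

theorem zpow_neg_mul_pow_mul_div {F : Type*} [Field F] {a : F} (ha : a ≠ 0) {s n : ℕ}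
    (hsn : s ≤ n) (c d : F) :
    a ^ (-(s : ℤ)) * ((c * a) ^ n / d) = c ^ n * (a ^ (n - s) / d) := by
  obtain ⟨k, rfl⟩ := Nat.exists_eq_add_of_le hsn
  rw [zpow_neg, zpow_natCast, mul_pow, Nat.add_sub_cancel_left, pow_add a]
  field_simp

theorem stmt_13_general (F : Type*) [Field F] (r : ℕ)
    (t : Fin r → F) (ht : Function.Injective t) (ht0 : ∀ k, t k ≠ 0)
    (y : F) (s : ℕ) (hs1 : 1 ≤ s) (hs2 : s ≤ r - 1) :
    ∑ k : Fin r, t k ^ (-(s : ℤ)) *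
      ∏ l ∈ Finset.univ.erase k, ((1 + y) * (t k / t l)) / (1 - t k / t l) = 0 := by
  have hterm : ∀ k : Fin r, t k ^ (-(s : ℤ)) *
      ∏ l ∈ univ.erase k, ((1 + y) * (t k / t l)) / (1 - t k / t l) =
      (-(1 + y)) ^ (r - 1) * (t k ^ (r - 1 - s) / ∏ l ∈ univ.erase k, (t k - t l)) := by
    intro k
    rw [prod_congr rfl fun l _ => mul_div_div_one_sub_div (1 + y) (t k) (ht0 l), prod_div_distrib,
      prod_const, card_erase_of_mem (mem_univ k), card_univ, Fintype.card_fin]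
    exact zpow_neg_mul_pow_mul_div (ht0 k) hs2 _ _
  have hcard : r - 1 - s + 1 < #(univ : Finset (Fin r)) := by
    rw [card_univ, Fintype.card_fin]; omega
  rw [sum_congr rfl fun k _ => hterm k, ← mul_sum,
    Lagrange.sum_pow_div_prod_sub_eq_zero ht.injOn hcard, mul_zero]

/-- The localization computation showing that the pushforward of
`mC(ℙ^{r-1} ∖ coordinate hyperplanes ⊂ ℙ^{r-1})·O(s)` to a point vanishes
for `1 ≤ s ≤ r - 1`. -/
theorem stmt_13 (F : Type*) [Field F] (r : ℕ) (hr : 2 ≤ r)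
    (t : Fin r → F) (ht : Function.Injective t) (ht0 : ∀ k, t k ≠ 0)
    (y : F) (s : ℕ) (hs1 : 1 ≤ s) (hs2 : s ≤ r - 1) :
    ∑ k : Fin r, t k ^ (-(s : ℤ)) *
      ∏ l ∈ Finset.univ.erase k, ((1 + y) * (t k / t l)) / (1 - t k / t l) = 0 :=
  stmt_13_general F r t ht ht0 y s hs1 hs2
end

section
/- Let n ≥ 1 and let a, b be Laurent polynomials in n variables over ℂ, i.e. finitely supported functions (Fin n → ℤ) →₀ ℂ, with b ≠ 0. For σ : Fin n → ℤ let r_σ(c) : ℂ ∖ {0} → ℂ denote the one-variable restriction r_σ(c)(t) = ∑_{v ∈ supp(c)} c(v)·t^{⟨σ,v⟩}, where ⟨σ,v⟩ = ∑ᵢ σᵢvᵢ; call σ generic if the map v ↦ ⟨σ,v⟩ is injective on supp(a) ∪ supp(b). Let the Newton polytope N(c) be the convex hull in ℝⁿ of supp(c) (viewed in ℝⁿ). Then the following are equivalent: (1) N(a) ⊆ N(b); (2) for every generic σ : Fin n → ℤ there exists L ∈ ℂ such that r_σ(a)(t)/r_σ(b)(t) tends to L as t tends to 0 through nonzero complex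 numbers. -/
open scoped BigOperators

/-- The restriction of a Laurent polynomial `c` in `n` variables to the
one-parameter subgroup `σ`: `r_σ(c)(t) = ∑_{v ∈ supp c} c(v)·t^{⟨σ,v⟩}`. -/
noncomputable def restrOPS {n : ℕ} (σ : Fin n → ℤ) (c : (Fin n → ℤ) →₀ ℂ)
    (t : ℂ) : ℂ :=
  ∑ v ∈ c.support, c v * t ^ (∑ i, σ i * v i)

/-- The Newton polytope of a Laurent polynomial in `n` variables:
the convex hull in `ℝⁿ` of its support. -/
noncomputable def newtonPolytope {n : ℕ} (c : (Fin n → ℤ) →₀ ℂ) :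
    Set (Fin n → ℝ) :=
  convexHull ℝ ((fun v : Fin n → ℤ => fun i => (v i : ℝ)) '' ↑c.support)

/-- `σ` is generic for the Laurent polynomials `a`, `b` if the pairing
`v ↦ ⟨σ,v⟩` is injective on `supp a ∪ supp b`. -/
def genericOPS {n : ℕ} (σ : Fin n → ℤ) (a b : (Fin n → ℤ) →₀ ℂ) : Prop :=
  Set.InjOn (fun v : Fin n → ℤ => ∑ i, σ i * v i) ↑(a.support ∪ b.support)

/-! For generic `σ` the lowest-order part of `r_σ(c)` is the single monomial `c v · t ^ ⟨σ, v⟩`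
at the `σ`-minimal point `v` of `supp c`, so `r_σ(a) / r_σ(b)` has a limit at `0` exactly when
`min ⟨σ, supp b⟩ ≤ min ⟨σ, supp a⟩`. If `N(a) ⊆ N(b)` this holds for every `σ`, because a linear
functional is bounded below on `N(b)` by its minimum on `supp b`. Conversely, a point of `supp a`
outside `N(b)` is strictly separated from `supp b` by a real functional (Hahn–Banach). Such
functionals form a nonempty open set, which meets the dense open set of functionals injective on
`supp a ∪ supp b`; rounding then yields an integer vector with a positive multiple in that
intersection, i.e. a generic `σ` for which the quotient blows up. -/

open Filter Topology Set

section Geometry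

variable {ι : Type*} [Fintype ι]

theorem exists_dotProduct_lt_of_notMem_convexHull [DecidableEq ι] {P : Set (ι → ℝ)}
    (hP : P.Finite) {x : ι → ℝ} (hx : x ∉ convexHull ℝ P) :
    ∃ σ : ι → ℝ, ∀ p ∈ P, σ ⬝ᵥ x < σ ⬝ᵥ p := by
  obtain ⟨f, u, hfx, hfP⟩ := geometric_hahn_banach_point_closed (convex_convexHull ℝ P)
    (hP.isClosed_convexHull ℝ) hx
  have hf : ∀ y, f y = (dotProductEquiv ℝ ι).symm f.toLinearMap ⬝ᵥ y := fun y =>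
    (LinearMap.congr_fun ((dotProductEquiv ℝ ι).apply_symm_apply f.toLinearMap) y).symm
  refine ⟨(dotProductEquiv ℝ ι).symm f.toLinearMap, fun p hp => ?_⟩
  rw [← hf, ← hf]
  exact hfx.trans (hfP p (subset_convexHull ℝ P hp))

theorem dotProduct_le_of_mem_convexHull {P : Set (ι → ℝ)} {σ : ι → ℝ} {m : ℝ}
    (hP : ∀ p ∈ P, m ≤ σ ⬝ᵥ p) {x : ι → ℝ} (hx : x ∈ convexHull ℝ P) : m ≤ σ ⬝ᵥ x :=
  convexHull_min hP
    (convex_halfSpace_ge ⟨dotProduct_add σ, fun c y => dotProduct_smul c σ y⟩ m) hx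

theorem dense_setOf_dotProduct_ne_zero [DecidableEq ι] {d : ι → ℝ} (hd : d ≠ 0) :
    Dense {σ : ι → ℝ | σ ⬝ᵥ d ≠ 0} := by
  have hker :
      {σ : ι → ℝ | σ ⬝ᵥ d ≠ 0} = (LinearMap.ker (dotProductEquiv ℝ ι d) : Set _)ᶜ := by
    ext σ; simp [dotProduct_comm]
  rw [hker, ← interior_eq_empty_iff_dense_compl, ← not_nonempty_iff_eq_empty]
  intro hint
  have hdd : d ∈ LinearMap.ker (dotProductEquiv ℝ ι d) := by
    rw [Submodule.eq_top_of_nonempty_interior' _ hint]; trivial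
  exact hd (dotProduct_self_eq_zero.mp hdd)

theorem setOf_injOn_dotProduct_eq_biInter (S : Set (ι → ℝ)) :
    {σ : ι → ℝ | InjOn (σ ⬝ᵥ ·) S} = ⋂ x ∈ S, ⋂ y ∈ S, {σ | σ ⬝ᵥ x = σ ⬝ᵥ y → x = y} := by
  ext σ; simp [InjOn]

theorem isOpen_setOf_dotProduct_eq_imp (x y : ι → ℝ) :
    IsOpen {σ : ι → ℝ | σ ⬝ᵥ x = σ ⬝ᵥ y → x = y} := by
  by_cases hxy : x = y
  · simp [hxy]
  · simpa [hxy] using isOpen_ne_fun (continuous_id.dotProduct continuous_const)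
      (continuous_id.dotProduct continuous_const)

theorem dense_setOf_dotProduct_eq_imp [DecidableEq ι] (x y : ι → ℝ) :
    Dense {σ : ι → ℝ | σ ⬝ᵥ x = σ ⬝ᵥ y → x = y} := by
  by_cases hxy : x = y
  · simp [hxy]
  · refine (dense_setOf_dotProduct_ne_zero (sub_ne_zero.mpr hxy)).mono fun σ hσ h => ?_
    exact absurd (by rw [dotProduct_sub, h, sub_self]) hσ

theorem isOpen_setOf_injOn_dotProduct {S : Set (ι → ℝ)} (hS : S.Finite) :
    IsOpen {σ : ι → ℝ | InjOn (σ ⬝ᵥ ·) S} := by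
  rw [setOf_injOn_dotProduct_eq_biInter]
  exact hS.isOpen_biInter fun x _ => hS.isOpen_biInter fun y _ =>
    isOpen_setOf_dotProduct_eq_imp x y

theorem dense_setOf_injOn_dotProduct [DecidableEq ι] {S : Set (ι → ℝ)} (hS : S.Finite) :
    Dense {σ : ι → ℝ | InjOn (σ ⬝ᵥ ·) S} := by
  rw [setOf_injOn_dotProduct_eq_biInter]
  refine dense_biInter_of_isOpen (fun x _ => ?_) hS.countable fun x _ => ?_
  · exact hS.isOpen_biInter fun y _ => isOpen_setOf_dotProduct_eq_imp x y
  · exact dense_biInter_of_isOpen (fun y _ => isOpen_setOf_dotProduct_eq_imp x y) hS.countable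
      fun y _ => dense_setOf_dotProduct_eq_imp x y

theorem exists_pos_smul_intCast_mem {U : Set (ι → ℝ)} (hU : IsOpen U) (hne : U.Nonempty) :
    ∃ r : ℝ, 0 < r ∧ ∃ τ : ι → ℤ, (r • fun i => (τ i : ℝ)) ∈ U := by
  obtain ⟨x, hx⟩ := hne
  obtain ⟨ε, hε, hball⟩ := Metric.isOpen_iff.mp hU x hx
  obtain ⟨N, hN⟩ := exists_nat_one_div_lt hε
  set r : ℝ := 1 / (N + 1)
  have hr : 0 < r := Nat.one_div_pos_of_nat
  refine ⟨r, hr, fun i => round (r⁻¹ * x i), hball ?_⟩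
  rw [Metric.mem_ball, dist_pi_lt_iff hε]
  intro i
  have hround := abs_sub_round (r⁻¹ * x i)
  calc dist (r * round (r⁻¹ * x i)) (x i) = r * |r⁻¹ * x i - round (r⁻¹ * x i)| := by
        rw [Real.dist_eq, ← abs_of_pos hr, ← abs_mul, abs_of_pos hr, abs_sub_comm]
        congr 1; field_simp
    _ ≤ r * (1 / 2) := by gcongr
    _ < ε := by linarith

end Geometry

theorem intCast_dotProduct {ι R : Type*} [Fintype ι] [Ring R] (σ v : ι → ℤ) :
    ((σ ⬝ᵥ v : ℤ) : R) = (fun i => (σ i : R)) ⬝ᵥ fun i => (v i : R) := by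
  simp [dotProduct]

variable {n : ℕ} {σ : Fin n → ℤ} {a b c : (Fin n → ℤ) →₀ ℂ}

theorem restrOPS_div_zpow {t : ℂ} (ht : t ≠ 0) (m : ℤ) :
    restrOPS σ c t / t ^ m = ∑ w ∈ c.support, c w * t ^ (σ ⬝ᵥ w - m) := by
  rw [restrOPS, Finset.sum_div]
  refine Finset.sum_congr rfl fun w _ => ?_
  rw [zpow_sub₀ ht, mul_div_assoc]
  rfl

theorem tendsto_restrOPS_div_zpow {m : ℤ} (hm : ∀ w ∈ c.support, m ≤ σ ⬝ᵥ w) :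
    Tendsto (fun t => restrOPS σ c t / t ^ m) (𝓝[≠] 0)
      (𝓝 (∑ w ∈ c.support, c w * 0 ^ (σ ⬝ᵥ w - m))) := by
  have hcont : Tendsto (fun t : ℂ => ∑ w ∈ c.support, c w * t ^ (σ ⬝ᵥ w - m)) (𝓝 0)
      (𝓝 (∑ w ∈ c.support, c w * 0 ^ (σ ⬝ᵥ w - m))) :=
    tendsto_finsetSum _ fun w hw => tendsto_const_nhds.mul
      (continuousAt_zpow₀ 0 _ (Or.inr (sub_nonneg.mpr (hm w hw)))).tendsto
  refine (hcont.mono_left nhdsWithin_le_nhds).congr' ?_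
  filter_upwards [self_mem_nhdsWithin] with t ht
  exact (restrOPS_div_zpow ht m).symm

theorem tendsto_restrOPS_div_zpow_of_injOn (hinj : InjOn (σ ⬝ᵥ ·) c.support)
    {v : Fin n → ℤ} (hv : v ∈ c.support) (hmin : ∀ w ∈ c.support, σ ⬝ᵥ v ≤ σ ⬝ᵥ w) :
    Tendsto (fun t => restrOPS σ c t / t ^ (σ ⬝ᵥ v)) (𝓝[≠] 0) (𝓝 (c v)) := by
  convert tendsto_restrOPS_div_zpow hmin using 2
  rw [Finset.sum_eq_single v (fun w hw hwv => ?_) (absurd hv), sub_self, zpow_zero, mul_one]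
  rw [zero_zpow _ (sub_ne_zero.mpr fun h => hwv (hinj hw hv h)), mul_zero]

theorem exists_tendsto_restrOPS_div (hinj : InjOn (σ ⬝ᵥ ·) b.support) {v : Fin n → ℤ}
    (hv : v ∈ b.support) (hminb : ∀ w ∈ b.support, σ ⬝ᵥ v ≤ σ ⬝ᵥ w)
    (hmina : ∀ w ∈ a.support, σ ⬝ᵥ v ≤ σ ⬝ᵥ w) :
    ∃ L, Tendsto (fun t => restrOPS σ a t / restrOPS σ b t) (𝓝[≠] 0) (𝓝 L) := by
  refine ⟨_, ((tendsto_restrOPS_div_zpow hmina).div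
    (tendsto_restrOPS_div_zpow_of_injOn hinj hv hminb) (b.mem_support_iff.mp hv)).congr' ?_⟩
  filter_upwards [self_mem_nhdsWithin] with t ht
  exact div_div_div_cancel_right₀ (zpow_ne_zero _ ht) _ _

theorem not_tendsto_restrOPS_div (hinja : InjOn (σ ⬝ᵥ ·) a.support)
    (hinjb : InjOn (σ ⬝ᵥ ·) b.support) (hb : b ≠ 0) {v : Fin n → ℤ} (hv : v ∈ a.support)
    (hsep : ∀ w ∈ b.support, σ ⬝ᵥ v < σ ⬝ᵥ w) (L : ℂ) :
    ¬Tendsto (fun t => restrOPS σ a t / restrOPS σ b t) (𝓝[≠] 0) (𝓝 L) := by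
  intro hL
  obtain ⟨va, hva, hmina⟩ := a.support.exists_min_image (σ ⬝ᵥ ·) ⟨v, hv⟩
  obtain ⟨vb, hvb, hminb⟩ :=
    b.support.exists_min_image (σ ⬝ᵥ ·) (Finsupp.support_nonempty_iff.mpr hb)
  have hlt : σ ⬝ᵥ va < σ ⬝ᵥ vb := (hmina v hv).trans_lt (hsep vb hvb)
  have hquot := (tendsto_restrOPS_div_zpow_of_injOn hinja hva hmina).div
    (tendsto_restrOPS_div_zpow_of_injOn hinjb hvb hminb) (b.mem_support_iff.mp hvb)
  have hquot_zero : Tendsto (fun t => (restrOPS σ a t / t ^ (σ ⬝ᵥ va)) /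
      (restrOPS σ b t / t ^ (σ ⬝ᵥ vb))) (𝓝[≠] 0) (𝓝 0) := by
    have := ((continuousAt_zpow₀ (0 : ℂ) (σ ⬝ᵥ vb - σ ⬝ᵥ va)
      (Or.inr (sub_nonneg.mpr hlt.le))).tendsto.mono_left nhdsWithin_le_nhds).mul hL
    rw [zero_zpow _ (sub_ne_zero.mpr hlt.ne'), zero_mul] at this
    refine this.congr' ?_
    filter_upwards [self_mem_nhdsWithin] with t ht
    simp only [zpow_sub₀ ht, div_eq_mul_inv, mul_inv, inv_inv]
    ring
  exact div_ne_zero (a.mem_support_iff.mp hva) (b.mem_support_iff.mp hvb)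
    (tendsto_nhds_unique hquot hquot_zero)

theorem le_dotProduct_of_newtonPolytope_subset (h : newtonPolytope a ⊆ newtonPolytope b)
    {m : ℤ} (hm : ∀ w ∈ b.support, m ≤ σ ⬝ᵥ w) : ∀ v ∈ a.support, m ≤ σ ⬝ᵥ v := by
  have hb : ∀ x ∈ newtonPolytope b, (m : ℝ) ≤ (fun i => (σ i : ℝ)) ⬝ᵥ x :=
    fun x => dotProduct_le_of_mem_convexHull <| by
      rintro _ ⟨w, hw, rfl⟩
      rw [← intCast_dotProduct]
      exact_mod_cast hm w hw
  intro v hv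
  have := hb _ (h (subset_convexHull ℝ _ ⟨v, hv, rfl⟩))
  rw [← intCast_dotProduct] at this
  exact_mod_cast this

theorem exists_injOn_dotProduct_of_notMem_newtonPolytope {v : Fin n → ℤ}
    (hv : (fun i => (v i : ℝ)) ∉ newtonPolytope b) (S : Finset (Fin n → ℤ)) :
    ∃ τ : Fin n → ℤ, InjOn (τ ⬝ᵥ ·) S ∧ ∀ w ∈ b.support, τ ⬝ᵥ v < τ ⬝ᵥ w := by
  obtain ⟨σ₀, hσ₀⟩ :=
    exists_dotProduct_lt_of_notMem_convexHull (b.support.finite_toSet.image _) hv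
  set U := ⋂ w ∈ b.support,
    {σ : Fin n → ℝ | (σ ⬝ᵥ fun i => (v i : ℝ)) < σ ⬝ᵥ fun i => (w i : ℝ)}
  have hU : IsOpen U := isOpen_biInter_finset fun w _ =>
    isOpen_lt (continuous_id.dotProduct continuous_const)
      (continuous_id.dotProduct continuous_const)
  have hσ₀U : σ₀ ∈ U := mem_iInter₂.mpr fun w hw => hσ₀ _ ⟨w, hw, rfl⟩
  have hS := S.finite_toSet.image fun w i => (w i : ℝ)
  obtain ⟨r, hr, τ, hτU, hτS⟩ := exists_pos_smul_intCast_mem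
    (hU.inter (isOpen_setOf_injOn_dotProduct hS))
    ((dense_setOf_injOn_dotProduct hS).inter_open_nonempty U hU ⟨σ₀, hσ₀U⟩)
  have hpair : ∀ w : Fin n → ℤ,
      ((r • fun i => (τ i : ℝ)) ⬝ᵥ fun i => (w i : ℝ)) = r * (τ ⬝ᵥ w : ℤ) := fun w => by
    rw [smul_dotProduct, intCast_dotProduct, smul_eq_mul]
  refine ⟨τ, fun x hx y hy hxy => ?_, fun w hw => ?_⟩
  · refine funext fun i => Int.cast_injective (congrFun (hτS (mem_image_of_mem _ hx)
      (mem_image_of_mem _ hy) ?_) i)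
    simp only [hpair]
    exact congrArg _ (congrArg _ hxy)
  · have hlt := mem_iInter₂.mp hτU w hw
    change (_ : ℝ) < _ at hlt
    rw [hpair, hpair] at hlt
    exact_mod_cast lt_of_mul_lt_mul_left hlt hr.le

theorem stmt_14_general (n : ℕ) (a b : (Fin n → ℤ) →₀ ℂ) (hb : b ≠ 0) :
    newtonPolytope a ⊆ newtonPolytope b ↔
      ∀ σ : Fin n → ℤ, genericOPS σ a b →
        ∃ L : ℂ, Filter.Tendsto (fun t : ℂ => restrOPS σ a t / restrOPS σ b t)
          (nhdsWithin 0 {0}ᶜ) (nhds L) := by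
  constructor
  · intro h σ hσ
    obtain ⟨v, hv, hmin⟩ :=
      b.support.exists_min_image (σ ⬝ᵥ ·) (Finsupp.support_nonempty_iff.mpr hb)
    exact exists_tendsto_restrOPS_div (hσ.mono (by simp)) hv hmin
      (le_dotProduct_of_newtonPolytope_subset h hmin)
  · intro h
    refine convexHull_min ?_ (convex_convexHull ℝ _)
    rintro _ ⟨v, hv, rfl⟩
    by_contra hvb
    obtain ⟨τ, hτ, hsep⟩ :=
      exists_injOn_dotProduct_of_notMem_newtonPolytope hvb (a.support ∪ b.support)
    obtain ⟨L, hL⟩ := h τ hτ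
    exact not_tendsto_restrOPS_div (hτ.mono (by simp)) (hτ.mono (by simp)) hb hv hsep L hL

/-- The Newton polytope/limit criterion: `N(a) ⊆ N(b)` iff for every generic
one-parameter subgroup `σ` the quotient of the restrictions of `a` and `b`
has a limit as `t → 0` through nonzero complex numbers. -/
theorem stmt_14 (n : ℕ) (hn : 1 ≤ n) (a b : (Fin n → ℤ) →₀ ℂ) (hb : b ≠ 0) :
    newtonPolytope a ⊆ newtonPolytope b ↔
      ∀ σ : Fin n → ℤ, genericOPS σ a b →
        ∃ L : ℂ, Filter.Tendsto (fun t : ℂ => restrOPS σ a t / restrOPS σ b t)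
          (nhdsWithin 0 {0}ᶜ) (nhds L) :=
  stmt_14_general n a b hb
end
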